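/- If G is a bipartite graph whose number of isolated vertices is not 1, then α(G) > |V(G)|/2 if and only if |core(G)| ≥ 2. -/

import Mathlib

/-!
Let `A` and `B = Aᶜ` be the colour classes of a 2-colouring of `G`. For `X ⊆ A` the set
`X ∪ (B \ N(X))` is stable, and every maximum stable set `S` is contained in the one built from
`X = S ∩ A`; hence `α(G) = |B| + max_{X ⊆ A} d(X)` with `d(X) = |X| - |N(X)|`, the maximum being
attained at every `S ∩ A`. Since `d` is supermodular, the maximisers are closed under intersection,
so a smallest one lies in every maximum stable set, i.e. in the core. If `α(G) > |V|/2`, one side,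
say `B`, has `|B| < α(G)`, so this smallest maximiser has `|X| > |N(X)|`; without isolated vertices
`N(X) ≠ ∅`, whence `|core(G)| ≥ |X| ≥ 2` (and if there are at least two isolated vertices, they all
lie in the core). Conversely, if `α(G) ≤ |V|/2` then `A` and `B` are disjoint maximum stable sets,
so the core is empty.
-/

open Finset

variable {V : Type*} [Fintype V] [DecidableEq V]

def stable (G : SimpleGraph V) (S : Finset V) : Prop :=
  ∀ a ∈ S, ∀ b ∈ S, ¬ G.Adj a b

open Classical in
noncomputable def nbhd (G : SimpleGraph V) (A : Finset V) : Finset V :=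
  Finset.univ.filter fun v => ∃ a ∈ A, G.Adj a v

open Classical in
noncomputable def alpha (G : SimpleGraph V) : ℕ :=
  Finset.univ.sup fun S : Finset V => if stable G S then S.card else 0

def maxStable (G : SimpleGraph V) (S : Finset V) : Prop :=
  stable G S ∧ S.card = alpha G

open Classical in
noncomputable def core (G : SimpleGraph V) : Finset V :=
  Finset.univ.filter fun v => ∀ S : Finset V, maxStable G S → v ∈ S

def isolated (G : SimpleGraph V) (v : V) : Prop := ∀ w, ¬ G.Adj v w

open Classical in
noncomputable def isol (G : SimpleGraph V) : Finset V :=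
  Finset.univ.filter fun v => isolated G v

section Neighbourhood

variable {G : SimpleGraph V}

lemma mem_nbhd {X : Finset V} {v : V} : v ∈ nbhd G X ↔ ∃ a ∈ X, G.Adj a v := by
  simp [nbhd]

lemma nbhd_union (X Y : Finset V) : nbhd G (X ∪ Y) = nbhd G X ∪ nbhd G Y := by
  ext v
  simp only [mem_nbhd, mem_union, or_and_right, exists_or]

lemma nbhd_inter_subset (X Y : Finset V) : nbhd G (X ∩ Y) ⊆ nbhd G X ∩ nbhd G Y := by
  intro v hv
  obtain ⟨a, ha, hadj⟩ := mem_nbhd.1 hv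
  exact mem_inter.2 ⟨mem_nbhd.2 ⟨a, (mem_inter.1 ha).1, hadj⟩,
    mem_nbhd.2 ⟨a, (mem_inter.1 ha).2, hadj⟩⟩

lemma card_nbhd_union_add_card_nbhd_inter_le (X Y : Finset V) :
    #(nbhd G (X ∪ Y)) + #(nbhd G (X ∩ Y)) ≤ #(nbhd G X) + #(nbhd G Y) := by
  have hunion := card_union_add_card_inter (nbhd G X) (nbhd G Y)
  have hinter := card_le_card (nbhd_inter_subset (G := G) X Y)
  rw [nbhd_union]
  omega

lemma mem_isol {v : V} : v ∈ isol G ↔ isolated G v := by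
  simp [isol]

lemma nbhd_nonempty_of_isol_eq_empty (hiso : isol G = ∅) {X : Finset V} (hX : X.Nonempty) :
    (nbhd G X).Nonempty := by
  obtain ⟨x, hx⟩ := hX
  have hx' : x ∉ isol G := hiso ▸ notMem_empty x
  obtain ⟨w, hw⟩ := not_forall_not.1 (mt mem_isol.2 hx')
  exact ⟨w, mem_nbhd.2 ⟨x, hx, hw⟩⟩

variable (G) in
noncomputable def difference (X : Finset V) : ℤ := #X - #(nbhd G X)

lemma difference_add_difference_le (X Y : Finset V) :
    difference G X + difference G Y ≤ difference G (X ∪ Y) + difference G (X ∩ Y) := by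
  have hX := card_union_add_card_inter X Y
  have hN := card_nbhd_union_add_card_nbhd_inter_le (G := G) X Y
  simp only [difference]
  omega

end Neighbourhood

section Stable

variable {G : SimpleGraph V}

lemma stable.card_le_alpha {S : Finset V} (h : stable G S) : #S ≤ alpha G := by
  classical
  have hS : (if stable G S then #S else 0) ≤ alpha G :=
    le_sup (f := fun S : Finset V => if stable G S then #S else 0) (mem_univ S)
  rwa [if_pos h] at hS

lemma exists_maxStable (G : SimpleGraph V) : ∃ S, maxStable G S := by
  classical
  obtain ⟨S, -, hS⟩ := exists_mem_eq_sup univ univ_nonempty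
    (fun S : Finset V => if stable G S then #S else 0)
  replace hS : alpha G = if stable G S then #S else 0 := hS
  by_cases hst : stable G S
  · exact ⟨S, hst, by rw [hS, if_pos hst]⟩
  · refine ⟨∅, fun a ha => absurd ha (notMem_empty a), ?_⟩
    rw [hS, if_neg hst, card_empty]

lemma mem_core {v : V} : v ∈ core G ↔ ∀ S, maxStable G S → v ∈ S := by
  simp [core]

lemma core_subset_of_maxStable {S : Finset V} (hS : maxStable G S) : core G ⊆ S :=
  fun _ hv => mem_core.1 hv S hS

lemma isol_subset_core : isol G ⊆ core G := by
  intro v hv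
  rw [mem_isol] at hv
  refine mem_core.2 fun S hS => ?_
  by_contra hvS
  have hstable : stable G (insert v S) := by
    intro a ha b hb hab
    rcases mem_insert.1 ha with rfl | ha
    · exact hv b hab
    rcases mem_insert.1 hb with rfl | hb
    · exact hv a hab.symm
    exact hS.1 a ha b hb hab
  have := hstable.card_le_alpha
  rw [card_insert_of_notMem hvS, hS.2] at this
  omega

end Stable

section Bipartition

variable {G : SimpleGraph V} {A : Finset V}

lemma nbhd_subset_compl (hA : stable G A) {X : Finset V} (hX : X ⊆ A) : nbhd G X ⊆ Aᶜ := by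
  intro v hv
  obtain ⟨a, ha, hadj⟩ := mem_nbhd.1 hv
  exact mem_compl.2 fun hvA => hA a (hX ha) v hvA hadj

lemma card_compl_add_difference_le_alpha (hA : stable G A) (hAc : stable G Aᶜ) {X : Finset V}
    (hX : X ⊆ A) : #Aᶜ + difference G X ≤ alpha G := by
  have hdisj : Disjoint X (Aᶜ \ nbhd G X) :=
    disjoint_left.2 fun x hx hx' => mem_compl.1 (mem_sdiff.1 hx').1 (hX hx)
  have hstable : stable G (X ∪ (Aᶜ \ nbhd G X)) := by
    intro a ha b hb hab
    rcases mem_union.1 ha with ha | ha <;> rcases mem_union.1 hb with hb | hb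
    · exact hA a (hX ha) b (hX hb) hab
    · exact (mem_sdiff.1 hb).2 (mem_nbhd.2 ⟨a, ha, hab⟩)
    · exact (mem_sdiff.1 ha).2 (mem_nbhd.2 ⟨b, hb, hab.symm⟩)
    · exact hAc a (mem_sdiff.1 ha).1 b (mem_sdiff.1 hb).1 hab
  have hcard := hstable.card_le_alpha
  rw [card_union_of_disjoint hdisj, card_sdiff_of_subset (nbhd_subset_compl hA hX)] at hcard
  have hN := card_le_card (nbhd_subset_compl hA hX)
  simp only [difference]
  omega

lemma card_compl_add_difference_inter_eq_alpha (hA : stable G A) (hAc : stable G Aᶜ)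
    {S : Finset V} (hS : maxStable G S) : #Aᶜ + difference G (S ∩ A) = alpha G := by
  have hsub : S \ A ⊆ Aᶜ \ nbhd G (S ∩ A) := by
    intro v hv
    rw [mem_sdiff] at hv ⊢
    refine ⟨mem_compl.2 hv.2, fun hvN => ?_⟩
    obtain ⟨a, ha, hadj⟩ := mem_nbhd.1 hvN
    exact hS.1 a (mem_inter.1 ha).1 v hv.1 hadj
  have hNA := nbhd_subset_compl hA (inter_subset_right (s₁ := S))
  have hsplit := card_inter_add_card_sdiff S A
  have hcard := card_le_card hsub
  rw [card_sdiff_of_subset hNA] at hcard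
  have hN := card_le_card hNA
  have hle := card_compl_add_difference_le_alpha hA hAc (inter_subset_right (s₁ := S))
  have hα := hS.2
  simp only [difference] at hle ⊢
  omega

lemma exists_subset_core_card_compl_add_difference_eq (hA : stable G A) (hAc : stable G Aᶜ) :
    ∃ X ⊆ A, X ⊆ core G ∧ #Aᶜ + difference G X = alpha G := by
  classical
  set F := A.powerset.filter fun X => #Aᶜ + difference G X = alpha G
  have hmemF : ∀ X, X ∈ F ↔ X ⊆ A ∧ #Aᶜ + difference G X = alpha G := by
    simp [F]
  have hinterF : ∀ S, maxStable G S → S ∩ A ∈ F := fun S hS =>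
    (hmemF _).2 ⟨inter_subset_right, card_compl_add_difference_inter_eq_alpha hA hAc hS⟩
  obtain ⟨S, hS⟩ := exists_maxStable G
  obtain ⟨X, hXF, hXmin⟩ := F.exists_min_image card ⟨_, hinterF S hS⟩
  obtain ⟨hXA, hX⟩ := (hmemF X).1 hXF
  refine ⟨X, hXA, fun v hv => mem_core.2 fun T hT => ?_, hX⟩
  -- by supermodularity `X ∩ (T ∩ A)` is again a maximiser, so by minimality it is `X`
  obtain ⟨hTA, hT⟩ := (hmemF _).1 (hinterF T hT)
  have hsuper := difference_add_difference_le (G := G) X (T ∩ A)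
  have hunion := card_compl_add_difference_le_alpha hA hAc (union_subset hXA hTA)
  have hXTA : X ∩ (T ∩ A) ⊆ A := inter_subset_left.trans hXA
  have hinter := card_compl_add_difference_le_alpha hA hAc hXTA
  have hXT : X ∩ (T ∩ A) ∈ F := (hmemF _).2 ⟨hXTA, by omega⟩
  have hXeq := eq_of_subset_of_card_le inter_subset_left (hXmin _ hXT)
  exact (mem_inter.1 (inter_eq_left.1 hXeq hv)).1

lemma two_le_card_core_of_card_compl_lt (hA : stable G A) (hAc : stable G Aᶜ)
    (hiso : isol G = ∅) (hlt : #Aᶜ < alpha G) : 2 ≤ #(core G) := by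
  obtain ⟨X, -, hXcore, hX⟩ := exists_subset_core_card_compl_add_difference_eq hA hAc
  have hsurplus : #(nbhd G X) < #X := by
    simp only [difference] at hX
    omega
  have hN := (nbhd_nonempty_of_isol_eq_empty hiso (card_pos.1 (show 0 < #X by omega))).card_pos
  calc 2 ≤ #X := by omega
    _ ≤ #(core G) := card_le_card hXcore

lemma two_le_card_core (hA : stable G A) (hAc : stable G Aᶜ) (hisol : #(isol G) ≠ 1)
    (hlt : Fintype.card V < 2 * alpha G) : 2 ≤ #(core G) := by
  by_cases hiso : isol G = ∅
  · have hsum := card_add_card_compl A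
    rcases Nat.lt_or_ge #Aᶜ (alpha G) with hAc_lt | hAc_ge
    · exact two_le_card_core_of_card_compl_lt hA hAc hiso hAc_lt
    · rw [← compl_compl A] at hA
      exact two_le_card_core_of_card_compl_lt hAc hA hiso (by rw [compl_compl]; omega)
  · have hpos := card_pos.2 (nonempty_iff_ne_empty.2 hiso)
    exact (show 2 ≤ #(isol G) by omega).trans (card_le_card isol_subset_core)

lemma card_lt_two_mul_alpha (hA : stable G A) (hAc : stable G Aᶜ) (hcore : (core G).Nonempty) :
    Fintype.card V < 2 * alpha G := by
  by_contra! hle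
  have hsum := card_add_card_compl A
  have h₁ := hA.card_le_alpha
  have h₂ := hAc.card_le_alpha
  obtain ⟨v, hv⟩ := hcore
  have hvA := core_subset_of_maxStable ⟨hA, by omega⟩ hv
  exact mem_compl.1 (core_subset_of_maxStable ⟨hAc, by omega⟩ hv) hvA

end Bipartition

lemma exists_stable_and_stable_compl {G : SimpleGraph V} (hbip : G.Colorable 2) :
    ∃ A, stable G A ∧ stable G Aᶜ := by
  obtain ⟨C⟩ := hbip
  refine ⟨univ.filter fun v => C v = 0, ?_, ?_⟩ <;> intro a ha b hb hab <;>
    simp only [mem_compl, mem_filter, mem_univ, true_and] at ha hb <;>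
    exact C.valid hab (by omega)

theorem stmt19 (G : SimpleGraph V) (hbip : G.Colorable 2)
    (hisol : (isol G).card ≠ 1) :
    Fintype.card V < 2 * alpha G ↔ 2 ≤ (core G).card := by
  obtain ⟨A, hA, hAc⟩ := exists_stable_and_stable_compl hbip
  exact ⟨two_le_card_core hA hAc hisol,
    fun h => card_lt_two_mul_alpha hA hAc (card_pos.1 (by omega))⟩
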